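/- With Σ∼P and Σ_C defined by Σ_C(i) = 1 + Σ_{l<k} #C_l + Σ_{j∈C_k} 𝟙{Σ(j)<Σ(i)} for i ∈ C_k, the expected Kendall's τ distance between Σ and Σ_C equals Σ_{1≤k<l≤K} Σ_{(i,j)∈C_k×C_l} p_{j,i}, where p_{j,i} = P(Σ(j)<Σ(i)). -/
import Mathlib


open Finset

/-- Pairwise marginal `p_{i,j} = P(σ(i) < σ(j))`. -/
def pairwiseMarginal {n : ℕ} (P : Equiv.Perm (Fin n) → ℝ) (i j : Fin n) : ℝ :=
  ∑ σ : Equiv.Perm (Fin n), if σ i < σ j then P σ else 0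

/-- Rank of item `i` under the bucketed permutation `Σ_C`. -/
def bucketedRank {n K : ℕ} (b : Fin n → Fin K) (σ : Equiv.Perm (Fin n))
    (i : Fin n) : ℕ :=
  1 + (Finset.univ.filter (fun j => b j < b i)).card
    + (Finset.univ.filter (fun j => b j = b i ∧ σ j < σ i)).card

/-- Kendall's τ "distance" between a permutation `σ` and an injective ranking
`f : Fin n → ℕ`: the number of discordant pairs. -/
def kendallTauFun {n : ℕ} (σ : Equiv.Perm (Fin n)) (f : Fin n → ℕ) : ℕ :=
  (Finset.univ.filter (fun p : Fin n × Fin n =>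
    p.1 < p.2 ∧ ¬((σ p.1 < σ p.2) ↔ (f p.1 < f p.2)))).card

/-- The expected Kendall's τ distance between `Σ ∼ P` and `Σ_C` equals the sum,
over inter-bucket pairs `(i,j)` with the bucket of `i` earlier than that of
`j`, of `p_{j,i} = P(Σ(j) < Σ(i))`. -/
lemma bucketedRank_lt {n K : ℕ} (b : Fin n → Fin K) (σ : Equiv.Perm (Fin n)) {i j : Fin n}
    (h : b i < b j ∨ (b i = b j ∧ σ i < σ j)) :
    bucketedRank b σ i < bucketedRank b σ j := by
  unfold bucketedRank
  rcases h with h | ⟨hbij, hs⟩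
  · have h1 : (univ.filter (fun j' => b j' = b i ∧ σ j' < σ i)).card
        < (univ.filter (fun j' => b j' = b i)).card := by
      apply Finset.card_lt_card
      constructor
      · intro x hx
        simp only [mem_filter] at *
        exact ⟨hx.1, hx.2.1⟩
      · intro hsub
        have := hsub (by simp : i ∈ univ.filter (fun j' => b j' = b i))
        simp at this
    have h2 : (univ.filter (fun j' => b j' < b i)).card
        + (univ.filter (fun j' => b j' = b i)).card
        ≤ (univ.filter (fun j' => b j' < b j)).card := by
      rw [← Finset.card_union_of_disjoint]
      · apply Finset.card_le_card
        intro x hx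
        simp only [mem_union, mem_filter, mem_univ, true_and] at *
        rcases hx with hx | hx
        · exact hx.trans h
        · exact hx ▸ h
      · rw [Finset.disjoint_left]
        intro x hx1 hx2
        simp only [mem_filter] at *
        exact absurd hx2.2 (ne_of_lt hx1.2)
    omega
  · have hA : (univ.filter (fun j' => b j' < b i)).card
        = (univ.filter (fun j' => b j' < b j)).card := by rw [hbij]
    have hB : (univ.filter (fun j' => b j' = b i ∧ σ j' < σ i)).card
        < (univ.filter (fun j' => b j' = b j ∧ σ j' < σ j)).card := by
      apply Finset.card_lt_card
      constructor
      · intro x hx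
        simp only [mem_filter] at *
        exact ⟨hx.1, hbij ▸ hx.2.1, hx.2.2.trans hs⟩
      · intro hsub
        have := hsub (by simp [hbij, hs] : i ∈ univ.filter
          (fun j' => b j' = b j ∧ σ j' < σ j))
        simp at this
    omega

lemma bucketedRank_lt_iff {n K : ℕ} (b : Fin n → Fin K) (σ : Equiv.Perm (Fin n)) {i j : Fin n}
    (hij : i ≠ j) :
    bucketedRank b σ i < bucketedRank b σ j ↔
      (b i < b j ∨ (b i = b j ∧ σ i < σ j)) := by
  constructor
  · intro h
    by_contra hc
    push_neg at hc
    rcases lt_trichotomy (b i) (b j) with h1 | h1 | h1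
    · exact absurd h1 (not_lt.mpr hc.1)
    · have hσ : σ i ≠ σ j := fun he => hij (σ.injective he)
      have : σ j < σ i := lt_of_le_of_ne (hc.2 h1) hσ.symm
      exact absurd (bucketedRank_lt b σ (Or.inr ⟨h1.symm, this⟩)) (by omega)
    · exact absurd (bucketedRank_lt b σ (Or.inl h1)) (by omega)
  · exact bucketedRank_lt b σ

lemma kendall_eq {n K : ℕ} (b : Fin n → Fin K) (σ : Equiv.Perm (Fin n)) :
    kendallTauFun σ (bucketedRank b σ)
      = (univ.filter (fun p : Fin n × Fin n => b p.1 < b p.2 ∧ σ p.2 < σ p.1)).card := by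
  unfold kendallTauFun
  have hset : (univ.filter (fun p : Fin n × Fin n =>
      p.1 < p.2 ∧ ¬((σ p.1 < σ p.2) ↔ (bucketedRank b σ p.1 < bucketedRank b σ p.2))))
      = (univ.filter (fun p : Fin n × Fin n =>
        p.1 < p.2 ∧ ((b p.1 < b p.2 ∧ σ p.2 < σ p.1) ∨ (b p.2 < b p.1 ∧ σ p.1 < σ p.2)))) := by
    apply Finset.filter_congr
    intro p _
    constructor
    · rintro ⟨hlt, hd⟩
      refine ⟨hlt, ?_⟩
      have hne : p.1 ≠ p.2 := ne_of_lt hlt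
      have hσne : σ p.1 ≠ σ p.2 := fun he => hne (σ.injective he)
      rw [bucketedRank_lt_iff b σ hne] at hd
      rcases lt_trichotomy (b p.1) (b p.2) with h1 | h1 | h1
      · left
        refine ⟨h1, ?_⟩
        by_contra hσ
        exact hd ⟨fun _ => Or.inl h1, fun _ =>
          lt_of_le_of_ne (not_lt.mp hσ) hσne⟩
      · exfalso
        apply hd
        constructor
        · intro hs; exact Or.inr ⟨h1, hs⟩
        · rintro (hb | ⟨_, hs⟩)
          · exact absurd h1 (ne_of_lt hb)
          · exact hs
      · right
        refine ⟨h1, ?_⟩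
        by_contra hσ
        exact hd ⟨fun hs => absurd hs hσ, fun hr => hr.elim
          (fun hx => absurd hx (asymm h1)) (fun hx => absurd hx.1 (ne_of_gt h1))⟩
    · rintro ⟨hlt, hd⟩
      refine ⟨hlt, ?_⟩
      have hne : p.1 ≠ p.2 := ne_of_lt hlt
      rw [bucketedRank_lt_iff b σ hne]
      rcases hd with ⟨hb, hs⟩ | ⟨hb, hs⟩
      · intro hiff
        exact absurd (hiff.mpr (Or.inl hb)) (asymm hs)
      · intro hiff
        rcases hiff.mp hs with h | ⟨h, _⟩
        · exact absurd hb (asymm h)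
        · exact absurd hb (h ▸ lt_irrefl _)
  rw [hset]
  apply Finset.card_bij'
    (i := fun p _ => if b p.1 < b p.2 then p else (p.2, p.1))
    (j := fun q _ => if q.1 < q.2 then q else (q.2, q.1))
  · intro p hp
    simp only [mem_filter, mem_univ, true_and] at hp ⊢
    rcases hp.2 with ⟨hb, hs⟩ | ⟨hb, hs⟩
    · rw [if_pos hb]; exact ⟨hb, hs⟩
    · rw [if_neg (asymm hb)]; exact ⟨hb, hs⟩
  · intro q hq
    simp only [mem_filter, mem_univ, true_and] at hq ⊢
    by_cases h : q.1 < q.2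
    · rw [if_pos h]; exact ⟨h, Or.inl hq⟩
    · have hne : q.1 ≠ q.2 := fun he => absurd (he ▸ hq.1) (lt_irrefl _)
      have h2 : q.2 < q.1 := lt_of_le_of_ne (not_lt.mp h) hne.symm
      rw [if_neg h]
      exact ⟨h2, Or.inr hq⟩
  · intro p hp
    simp only [mem_filter, mem_univ, true_and] at hp
    rcases hp.2 with ⟨hb, _⟩ | ⟨hb, _⟩
    · rw [if_pos hb, if_pos hp.1]
    · rw [if_neg (asymm hb)]
      simp only
      rw [if_neg (asymm hp.1)]
  · intro q hq
    simp only [mem_filter, mem_univ, true_and] at hq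
    by_cases h : q.1 < q.2
    · rw [if_pos h, if_pos hq.1]
    · rw [if_neg h]
      simp only
      rw [if_neg (asymm hq.1)]

theorem expected_kendallTau_bucketed {n K : ℕ} (b : Fin n → Fin K)
    (hb : Function.Surjective b) (P : Equiv.Perm (Fin n) → ℝ)
    (hP0 : ∀ σ, 0 ≤ P σ) (hP1 : ∑ σ : Equiv.Perm (Fin n), P σ = 1) :
    ∑ σ : Equiv.Perm (Fin n), P σ * (kendallTauFun σ (bucketedRank b σ) : ℝ) =
      ∑ p ∈ Finset.univ.filter (fun p : Fin n × Fin n => b p.1 < b p.2),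
        pairwiseMarginal P p.2 p.1 := by
  calc ∑ σ : Equiv.Perm (Fin n), P σ * (kendallTauFun σ (bucketedRank b σ) : ℝ)
      = ∑ σ : Equiv.Perm (Fin n), ∑ p : Fin n × Fin n,
          if b p.1 < b p.2 ∧ σ p.2 < σ p.1 then P σ else 0 := by
        refine Finset.sum_congr rfl fun σ _ => ?_
        rw [kendall_eq b σ, Finset.card_filter]
        push_cast
        rw [Finset.mul_sum]
        refine Finset.sum_congr rfl fun p _ => ?_
        by_cases h : b p.1 < b p.2 ∧ σ p.2 < σ p.1 <;> simp [h]
    _ = ∑ p : Fin n × Fin n, ∑ σ : Equiv.Perm (Fin n),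
          if b p.1 < b p.2 ∧ σ p.2 < σ p.1 then P σ else 0 := Finset.sum_comm
    _ = ∑ p ∈ Finset.univ.filter (fun p : Fin n × Fin n => b p.1 < b p.2),
          pairwiseMarginal P p.2 p.1 := by
        rw [Finset.sum_filter]
        refine Finset.sum_congr rfl fun p _ => ?_
        unfold pairwiseMarginal
        by_cases h : b p.1 < b p.2
        · simp [h]
        · simp [h]
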